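/- Let G ∈ L²(γ) and define G_∞(x) = E[G(Z+x)] = ∫ G(z) φ(z−x) dz for a standard normal Z. Then G_∞ is well defined for all x ∈ ℝ and admits the everywhere-convergent power series expansion G_∞(x) = Σ_{m=0}^∞ c_m x^m, where c_m = E[G(Z) H_m(Z)]/m!. -/

import Mathlib

open MeasureTheory Real

noncomputable def stdPhi (x : ℝ) : ℝ := (Real.sqrt (2 * Real.pi))⁻¹ * Real.exp (-x ^ 2 / 2)

noncomputable def hermiteEval (m : ℕ) (z : ℝ) : ℝ :=
  Polynomial.aeval z (Polynomial.hermite m)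

/-! The Hermite generating function `∑ H_m(z) x^m / m! = exp (x z - x²/2)` rewrites
`φ(z - x) = exp (x z - x²/2) φ(z)` as `∑ H_m(z) φ(z) x^m / m!`, and this series may be integrated
against `G` term by term by dominated convergence: with the Hermite coefficients replaced by their
absolute values the series sums to `exp (|x| |z| + x²/2)`, and `|G| exp (c |z|) ∈ L¹(γ)` because
`G` and `exp (c |z|)` are in `L²(γ)`. Both generating functions are the cases `ε = ∓1` of
`exp (a b + ε b²/2) = ∑_m P^ε_m(a) b^m / m!`, obtained by regrouping the Cauchy product of
`exp (a b)` and `exp (ε b²/2)` along `m = j + 2k`. -/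

open Nat

theorem Nat.factorial_two_mul_eq (k : ℕ) : (2 * k)! = 2 ^ k * k ! * (2 * k - 1)‼ := by
  cases k with
  | zero => rfl
  | succ n =>
    rw [show 2 * (n + 1) = 2 * n + 1 + 1 by ring, factorial_eq_mul_doubleFactorial,
      show 2 * n + 1 + 1 = 2 * (n + 1) by ring, doubleFactorial_two_mul,
      show 2 * (n + 1) - 1 = 2 * n + 1 by omega]

/-- The coefficient of `a ^ j * b ^ m / m!` in `exp (a * b + ε * b ^ 2 / 2)`; for `ε = -1` these
are the coefficients of the probabilists' Hermite polynomials. -/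
noncomputable def genHermiteCoeff (ε : ℝ) (m j : ℕ) : ℝ :=
  if Even (m + j) then ε ^ ((m - j) / 2) * ((m - j - 1)‼ * m.choose j : ℕ) else 0

noncomputable def genHermite (ε : ℝ) (m : ℕ) (a : ℝ) : ℝ :=
  ∑ j ∈ Finset.range (m + 1), genHermiteCoeff ε m j * a ^ j

theorem genHermiteCoeff_eq_zero_of_lt {ε : ℝ} {m j : ℕ} (h : m < j) :
    genHermiteCoeff ε m j = 0 := by
  simp [genHermiteCoeff, Nat.choose_eq_zero_of_lt h]

theorem exists_eq_add_two_mul_of_genHermiteCoeff_ne_zero {ε : ℝ} {m j : ℕ}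
    (h : genHermiteCoeff ε m j ≠ 0) : ∃ k, m = j + 2 * k := by
  have hle : j ≤ m := by
    by_contra hlt
    exact h (genHermiteCoeff_eq_zero_of_lt (by omega))
  have ⟨c, hc⟩ : Even (m + j) := by
    by_contra hodd
    exact h (if_neg hodd)
  exact ⟨(m - j) / 2, by omega⟩

theorem genHermiteCoeff_add_two_mul_mul_div (ε : ℝ) (j k : ℕ) (a b : ℝ) :
    genHermiteCoeff ε (j + 2 * k) j * a ^ j * b ^ (j + 2 * k) / (j + 2 * k)!
      = (a * b) ^ j / j ! * ((ε * b ^ 2 / 2) ^ k / k !) := by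
  have hcoeff : genHermiteCoeff ε (j + 2 * k) j * ((j ! * (2 ^ k * k !) : ℕ) : ℝ)
      = ε ^ k * (j + 2 * k)! := by
    rw [genHermiteCoeff, if_pos ⟨j + k, by ring⟩, show (j + 2 * k - j) / 2 = k by omega,
      show j + 2 * k - j - 1 = 2 * k - 1 by omega, mul_assoc, ← Nat.cast_mul]
    congr 2
    rw [← Nat.choose_mul_factorial_mul_factorial (Nat.le_add_right j (2 * k)),
      Nat.add_sub_cancel_left, factorial_two_mul_eq]
    ring
  push_cast at hcoeff
  rw [div_pow, mul_pow, mul_pow, pow_add, pow_mul]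
  field_simp
  linear_combination (a ^ j * b ^ j * (b ^ 2) ^ k) * hcoeff

theorem Real.hasSum_pow_div_factorial (u : ℝ) : HasSum (fun n : ℕ => u ^ n / n !) (exp u) := by
  rw [Real.exp_eq_exp_ℝ]
  exact NormedSpace.expSeries_div_hasSum_exp u

theorem Real.hasSum_prod_pow_div_factorial (u v : ℝ) :
    HasSum (fun p : ℕ × ℕ => u ^ p.1 / p.1 ! * (v ^ p.2 / p.2 !)) (exp (u + v)) := by
  have hnorm (w : ℝ) : Summable (fun n : ℕ => ‖w ^ n / (n ! : ℝ)‖) :=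
    (Real.summable_pow_div_factorial |w|).congr fun n => by
      rw [Real.norm_eq_abs, abs_div, abs_pow, Nat.abs_cast]
  have hprod := (hasSum_pow_div_factorial u).mul (hasSum_pow_div_factorial v)
    (summable_mul_of_summable_norm (hnorm u) (hnorm v))
  rwa [← Real.exp_add] at hprod

theorem hasSum_genHermiteCoeff_prod (ε a b : ℝ) :
    HasSum (fun p : ℕ × ℕ => genHermiteCoeff ε p.1 p.2 * a ^ p.2 * b ^ p.1 / p.1 !)
      (exp (a * b + ε * b ^ 2 / 2)) := by
  set i : ℕ × ℕ → ℕ × ℕ := fun q => (q.1 + 2 * q.2, q.1)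
  have hinj : Function.Injective i := by
    rintro ⟨j, k⟩ ⟨j', k'⟩ h
    simp only [i, Prod.mk.injEq] at h ⊢
    omega
  have hsupp : ∀ p ∉ Set.range i,
      genHermiteCoeff ε p.1 p.2 * a ^ p.2 * b ^ p.1 / p.1 ! = 0 := by
    rintro ⟨m, j⟩ hp
    suffices genHermiteCoeff ε m j = 0 by simp [this]
    by_contra hne
    obtain ⟨k, rfl⟩ := exists_eq_add_two_mul_of_genHermiteCoeff_ne_zero hne
    exact hp ⟨(j, k), rfl⟩
  rw [← hinj.hasSum_iff hsupp]
  convert Real.hasSum_prod_pow_div_factorial (a * b) (ε * b ^ 2 / 2) using 2 with q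
  exact genHermiteCoeff_add_two_mul_mul_div ε q.1 q.2 a b

theorem hasSum_genHermite (ε a b : ℝ) :
    HasSum (fun m : ℕ => genHermite ε m a * b ^ m / m !) (exp (a * b + ε * b ^ 2 / 2)) := by
  refine (hasSum_genHermiteCoeff_prod ε a b).prod_fiberwise fun m => ?_
  rw [genHermite, Finset.sum_mul, Finset.sum_div]
  refine hasSum_sum_of_ne_finset_zero fun j hj => ?_
  rw [genHermiteCoeff_eq_zero_of_lt (by simpa using hj)]
  simp

theorem abs_genHermite_le (ε : ℝ) (m : ℕ) (a : ℝ) :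
    |genHermite ε m a| ≤ genHermite |ε| m |a| := by
  refine (Finset.abs_sum_le_sum_abs _ _).trans (Finset.sum_le_sum fun j _ => ?_)
  simp only [genHermiteCoeff]
  split_ifs <;> simp [abs_mul, abs_pow]

theorem hermiteEval_eq_genHermite (m : ℕ) (z : ℝ) : hermiteEval m z = genHermite (-1) m z := by
  rw [hermiteEval, Polynomial.aeval_eq_sum_range' (n := m + 1) (by simp)]
  refine Finset.sum_congr rfl fun j _ => ?_
  rw [Polynomial.coeff_hermite, genHermiteCoeff, zsmul_eq_mul]
  split_ifs <;> push_cast <;> ring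

theorem abs_hermiteEval_le (m : ℕ) (z : ℝ) : |hermiteEval m z| ≤ genHermite 1 m |z| := by
  simpa only [← hermiteEval_eq_genHermite, abs_neg, abs_one] using abs_genHermite_le (-1) m z

theorem hasSum_hermiteEval_mul_pow_div_factorial (z x : ℝ) :
    HasSum (fun m : ℕ => hermiteEval m z * x ^ m / m !) (exp (x * z - x ^ 2 / 2)) := by
  simp_rw [hermiteEval_eq_genHermite]
  convert hasSum_genHermite (-1) z x using 2
  ring

theorem stdPhi_nonneg (z : ℝ) : 0 ≤ stdPhi z := by
  unfold stdPhi; positivity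

@[fun_prop]
theorem continuous_stdPhi : Continuous stdPhi := by
  unfold stdPhi; fun_prop

@[fun_prop]
theorem continuous_hermiteEval (m : ℕ) : Continuous (hermiteEval m) :=
  Polynomial.continuous_aeval _

theorem stdPhi_sub (x z : ℝ) : stdPhi (z - x) = exp (x * z - x ^ 2 / 2) * stdPhi z := by
  unfold stdPhi
  rw [mul_left_comm, ← Real.exp_add]
  ring_nf

theorem integrable_exp_mul_stdPhi (c : ℝ) : Integrable (fun z => exp (c * z) * stdPhi z) := by
  have h := ((integrable_exp_neg_mul_sq (b := 1 / 2) (by norm_num)).comp_sub_right c).const_mul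
    (exp (c ^ 2 / 2) * (√(2 * π))⁻¹)
  refine h.congr (.of_forall fun z => ?_)
  simp only [stdPhi, mul_left_comm _ (√(2 * π))⁻¹, mul_assoc, ← Real.exp_add]
  ring_nf

theorem integrable_exp_mul_abs_mul_stdPhi (c : ℝ) :
    Integrable (fun z => exp (c * |z|) * stdPhi z) := by
  refine ((integrable_exp_mul_stdPhi c).add (integrable_exp_mul_stdPhi (-c))).mono'
    (by fun_prop) (.of_forall fun z => ?_)
  rw [Real.norm_eq_abs, abs_of_nonneg (by have := stdPhi_nonneg z; positivity), Pi.add_apply,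
    ← add_mul]
  refine mul_le_mul_of_nonneg_right ?_ (stdPhi_nonneg z)
  rcases abs_cases z with ⟨hz, -⟩ | ⟨hz, -⟩
  · rw [hz]
    exact le_add_of_nonneg_right (exp_pos _).le
  · rw [hz, mul_neg, ← neg_mul]
    exact le_add_of_nonneg_left (exp_pos _).le

-- `|f g| w ≤ (f² + g²) w / 2`
theorem Integrable.mul_mul_of_sq_mul {α : Type*} [MeasurableSpace α] {μ : Measure α}
    {f g w : α → ℝ} (hf : AEStronglyMeasurable f μ) (hg : AEStronglyMeasurable g μ)
    (hw : AEStronglyMeasurable w μ) (hw0 : ∀ a, 0 ≤ w a)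
    (hfw : Integrable (fun a => f a ^ 2 * w a) μ) (hgw : Integrable (fun a => g a ^ 2 * w a) μ) :
    Integrable (fun a => f a * g a * w a) μ := by
  refine ((hfw.add hgw).div_const 2).mono' (hf.mul hg |>.mul hw) (.of_forall fun a => ?_)
  rw [Real.norm_eq_abs, abs_mul, abs_mul, abs_of_nonneg (hw0 a), Pi.add_apply]
  have := hw0 a
  nlinarith [mul_nonneg (sq_nonneg (|f a| - |g a|)) this, sq_abs (f a), sq_abs (g a)]

theorem integrable_abs_mul_exp_mul_abs_mul_stdPhi {G : ℝ → ℝ} (hG : Measurable G)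
    (hL2 : Integrable (fun z => G z ^ 2 * stdPhi z)) (c : ℝ) :
    Integrable (fun z => |G z| * exp (c * |z|) * stdPhi z) := by
  refine Integrable.mul_mul_of_sq_mul (by fun_prop) (by fun_prop) (by fun_prop) stdPhi_nonneg
    (by simpa only [sq_abs] using hL2) ?_
  simpa only [← Real.exp_nat_mul, Nat.cast_ofNat, ← mul_assoc]
    using integrable_exp_mul_abs_mul_stdPhi (2 * c)

theorem integrable_mul_stdPhi_sub {G : ℝ → ℝ} (hG : Measurable G)
    (hL2 : Integrable (fun z => G z ^ 2 * stdPhi z)) (x : ℝ) :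
    Integrable (fun z => G z * stdPhi (z - x)) := by
  refine ((integrable_abs_mul_exp_mul_abs_mul_stdPhi hG hL2 |x|).const_mul
    (exp (-(x ^ 2 / 2)))).mono' (by fun_prop) (.of_forall fun z => ?_)
  have hxz : x * z ≤ |x| * |z| := abs_mul x z ▸ le_abs_self _
  have := stdPhi_nonneg z
  calc ‖G z * stdPhi (z - x)‖ = |G z| * (exp (x * z - x ^ 2 / 2) * stdPhi z) := by
        rw [norm_mul, Real.norm_eq_abs, Real.norm_eq_abs, abs_of_nonneg (stdPhi_nonneg _),
          stdPhi_sub]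
    _ ≤ |G z| * (exp (|x| * |z| - x ^ 2 / 2) * stdPhi z) := by gcongr
    _ = _ := by rw [sub_eq_add_neg, Real.exp_add]; ring

theorem hasSum_integral_hermiteEval_mul_pow {G : ℝ → ℝ} (hG : Measurable G)
    (hL2 : Integrable (fun z => G z ^ 2 * stdPhi z)) (x : ℝ) :
    HasSum (fun m : ℕ => (∫ z, G z * hermiteEval m z * stdPhi z) / m ! * x ^ m)
      (∫ z, G z * stdPhi (z - x)) := by
  let bound (m : ℕ) (z : ℝ) : ℝ := |G z| * stdPhi z * (genHermite 1 m |z| * |x| ^ m / m !)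
  have hbound (z : ℝ) : HasSum (bound · z)
      (|G z| * stdPhi z * exp (|z| * |x| + 1 * |x| ^ 2 / 2)) :=
    (hasSum_genHermite 1 |z| |x|).mul_left _
  have h := hasSum_integral_of_dominated_convergence (μ := volume)
    (F := fun m z => G z * hermiteEval m z * stdPhi z / m ! * x ^ m)
    (f := fun z => G z * stdPhi (z - x)) bound (by fun_prop) ?_
    (.of_forall fun z => (hbound z).summable) ?_ ?_
  · simpa only [integral_mul_const, integral_div] using h
  · refine fun m => .of_forall fun z => ?_
    simp only [bound, norm_mul, norm_div, norm_pow, Real.norm_eq_abs, Nat.abs_cast,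
      abs_of_nonneg (stdPhi_nonneg z)]
    have := stdPhi_nonneg z
    calc |G z| * |hermiteEval m z| * stdPhi z / m ! * |x| ^ m
        ≤ |G z| * genHermite 1 m |z| * stdPhi z / m ! * |x| ^ m := by
          gcongr; exact abs_hermiteEval_le m z
      _ = _ := by ring
  · simp_rw [fun z => (hbound z).tsum_eq]
    refine ((integrable_abs_mul_exp_mul_abs_mul_stdPhi hG hL2 |x|).mul_const
      (exp (x ^ 2 / 2))).congr (.of_forall fun z => ?_)
    simp only [one_mul, sq_abs, Real.exp_add, mul_comm |z|]
    ring
  · refine .of_forall fun z => ?_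
    have h := (hasSum_hermiteEval_mul_pow_div_factorial z x).mul_left (G z * stdPhi z)
    have hterm (m : ℕ) : G z * stdPhi z * (hermiteEval m z * x ^ m / m !)
        = G z * hermiteEval m z * stdPhi z / m ! * x ^ m := by ring
    have hval : G z * stdPhi (z - x) = G z * stdPhi z * exp (x * z - x ^ 2 / 2) := by
      rw [stdPhi_sub]; ring
    simp only [hterm] at h
    rwa [hval]

/-- For `G ∈ L²(γ)`, `G_∞(x) = ∫ G(z) φ(z−x) dz` is well defined for all `x`
and equals the everywhere-convergent power series `Σ c_m x^m` with
`c_m = (∫ G(z) H_m(z) dγ(z))/m!`. -/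
theorem weierstrass_transform_power_series
    (G : ℝ → ℝ) (hmeas : Measurable G)
    (hL2 : Integrable (fun z => (G z) ^ 2 * stdPhi z)) :
    (∀ x : ℝ, Integrable (fun z => G z * stdPhi (z - x))) ∧
    (∀ x : ℝ,
      Summable (fun m : ℕ =>
        ((∫ z : ℝ, G z * hermiteEval m z * stdPhi z) / (Nat.factorial m : ℝ)) * x ^ m) ∧
      ∫ z : ℝ, G z * stdPhi (z - x)
        = ∑' m : ℕ,
            ((∫ z : ℝ, G z * hermiteEval m z * stdPhi z) / (Nat.factorial m : ℝ)) * x ^ m) :=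
  ⟨integrable_mul_stdPhi_sub hmeas hL2, fun x =>
    have h := hasSum_integral_hermiteEval_mul_pow hmeas hL2 x
    ⟨h.summable, h.tsum_eq.symm⟩⟩
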